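/- arXiv:2201.13330 — 3 statements merged into one kernel-verified Lean document; each statement's English description precedes it below -/
import Mathlib

section
/- Let ω : [0,1] → ℝ be continuous and strictly increasing with ω(0) = 0 and ω(r) ≥ r for all r ∈ [0,1], and assume ∫₀¹ ω(r)²/r dr < ∞. Fix c₄ > 0 and χ > 1, let r_q (for q > 1) be defined as in the context, and let k₀ be the least natural number with χ^{k₀} > 19/2. Then there is a constant C > 0, depending only on χ and c₄, such that ∑_{k=k₀}^∞ χ^{−k} · log(1 / r_{χ^k + 1/2}) ≤ C · ∫₀¹ ω(r)²/r dr. -/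
/-!
Write `ρ_k = r_{χ^{k₀+k}+1/2}`. For `r ∈ (ρ_k, 1]` the definition of `r_q` forces
`c₄ ω(r) > (8(q-1))^{-1/2}`, i.e. `χ^{-(k₀+k)} ≤ 8 c₄² ω(r)²`. Writing `log(1/ρ_k) = ∫_{ρ_k}^1 dr/r`
and exchanging sum and integral bounds the partial sums by `∫₀¹ (∑_{k : ρ_k < r} χ^{-(k₀+k)}) dr/r`.
The inner sum is part of a geometric series, hence at most `(1 - χ⁻¹)⁻¹` times its largest
term, which is at most `8 c₄² ω(r)²`.
-/

open MeasureTheory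

/-- For `q > 1`, `rq c₄ ω q = sup{ r ∈ (0,1] : c₄·ω(r) ≤ (8(q−1))^{−1/2} }`. -/
noncomputable def rq (c₄ : ℝ) (ω : ℝ → ℝ) (q : ℝ) : ℝ :=
  sSup {r : ℝ | r ∈ Set.Ioc (0 : ℝ) 1 ∧ c₄ * ω r ≤ (8 * (q - 1)) ^ (-(1 / 2) : ℝ)}

open Set

theorem Finset.sum_mul_pow_le_div_one_sub {s : Finset ℕ} {c x B : ℝ} (hx₀ : 0 ≤ x) (hx₁ : x < 1)
    (hc : 0 ≤ c) (hB : 0 ≤ B) (h : ∀ k ∈ s, c * x ^ k ≤ B) :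
    ∑ k ∈ s, c * x ^ k ≤ B / (1 - x) := by
  rcases s.eq_empty_or_nonempty with rfl | hs
  · simpa using div_nonneg hB (sub_nonneg.2 hx₁.le)
  set j := s.min' hs
  have hsub : s ⊆ Finset.Ico j (s.max' hs + 1) := fun k hk =>
    Finset.mem_Ico.2 ⟨s.min'_le k hk, Nat.lt_succ_of_le (s.le_max' k hk)⟩
  calc ∑ k ∈ s, c * x ^ k
      ≤ ∑ k ∈ Finset.Ico j (s.max' hs + 1), c * x ^ k :=
        Finset.sum_le_sum_of_subset_of_nonneg hsub fun k _ _ => by positivity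
    _ = c * ∑ k ∈ Finset.Ico j (s.max' hs + 1), x ^ k := (Finset.mul_sum _ _ _).symm
    _ ≤ c * (x ^ j / (1 - x)) :=
        mul_le_mul_of_nonneg_left (geom_sum_Ico_le_of_lt_one hx₀ hx₁) hc
    _ = c * x ^ j / (1 - x) := (mul_div_assoc _ _ _).symm
    _ ≤ B / (1 - x) := div_le_div_of_nonneg_right (h j (s.min'_mem hs)) (sub_nonneg.2 hx₁.le)

theorem sum_mul_log_inv_le_setIntegral {ι : Type*} (s : Finset ι) {a ρ : ι → ℝ} {g : ℝ → ℝ}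
    (hρ : ∀ k ∈ s, ρ k ∈ Ioc 0 1) (hg : IntegrableOn g (Ioc 0 1))
    (hag : ∀ r ∈ Ioc (0 : ℝ) 1, ∑ k ∈ s with ρ k < r, a k ≤ r * g r) :
    ∑ k ∈ s, a k * Real.log (1 / ρ k) ≤ ∫ r in Ioc 0 1, g r := by
  have hint : ∀ k ∈ s,
      IntegrableOn ((Ioc (ρ k) 1).indicator fun r : ℝ => a k * r⁻¹) (Ioc 0 1) := fun k hk =>
    ((integrable_indicator_iff measurableSet_Ioc).2 <|
      (ContinuousOn.integrableOn_Icc (continuousOn_const.mul (continuousOn_inv₀.mono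
        fun r hr => ((hρ k hk).1.trans_le hr.1).ne'))).mono_set
          Ioc_subset_Icc_self).integrableOn
  have hterm : ∀ k ∈ s, a k * Real.log (1 / ρ k)
      = ∫ r in Ioc 0 1, (Ioc (ρ k) 1).indicator (fun r => a k * r⁻¹) r := by
    intro k hk
    obtain ⟨hρ₀, hρ₁⟩ := hρ k hk
    rw [setIntegral_indicator measurableSet_Ioc,
      inter_eq_right.2 (Ioc_subset_Ioc_left hρ₀.le), integral_const_mul,
      ← intervalIntegral.integral_of_le hρ₁, integral_inv (notMem_uIcc_of_lt hρ₀ one_pos)]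
  rw [Finset.sum_congr rfl hterm, ← integral_finsetSum _ hint]
  refine setIntegral_mono_on (integrable_finsetSum _ hint) hg measurableSet_Ioc fun r hr => ?_
  have hsum : ∑ k ∈ s, (Ioc (ρ k) 1).indicator (fun r => a k * r⁻¹) r
      = (∑ k ∈ s with ρ k < r, a k) * r⁻¹ := by
    rw [Finset.sum_filter, Finset.sum_mul]
    refine Finset.sum_congr rfl fun k _ => ?_
    simp only [indicator_apply, mem_Ioc, hr.2, and_true, ite_mul, zero_mul]
  rw [hsum, ← div_eq_mul_inv, div_le_iff₀ hr.1, mul_comm]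
  exact hag r hr

section rq

variable {c₄ : ℝ} {ω : ℝ → ℝ} {q : ℝ}

theorem rq_mem_Ioc (hω : ContinuousWithinAt ω (Icc 0 1) 0) (hω₀ : ω 0 = 0) (hq : 1 < q) :
    rq c₄ ω q ∈ Ioc 0 1 := by
  have hM : 0 < (8 * (q - 1)) ^ (-(1 / 2) : ℝ) := Real.rpow_pos_of_pos (by linarith) _
  have hlim : ContinuousWithinAt (fun r => c₄ * ω r) (Ioc 0 1) 0 :=
    (continuousWithinAt_const.mul hω).mono Ioc_subset_Icc_self
  have := left_nhdsWithin_Ioc_neBot (zero_lt_one' ℝ)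
  obtain ⟨r, hrM, hr⟩ := ((hlim.eventually (gt_mem_nhds (show c₄ * ω 0 < _ by
    rwa [hω₀, mul_zero]))).and self_mem_nhdsWithin).exists
  exact ⟨hr.1.trans_le (le_csSup ⟨1, fun r hr => hr.1.2⟩ ⟨hr, hrM.le⟩),
    csSup_le ⟨r, hr, hrM.le⟩ fun r hr => hr.1.2⟩

theorem inv_lt_sq_of_rq_lt {r : ℝ} (hq : 1 < q) (hr : r ∈ Ioc 0 1) (h : rq c₄ ω q < r) :
    (8 * (q - 1))⁻¹ < (c₄ * ω r) ^ 2 := by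
  have hM : (8 * (q - 1)) ^ (-(1 / 2) : ℝ) < c₄ * ω r := by
    by_contra! hle
    exact h.not_ge (le_csSup ⟨1, fun r hr => hr.1.2⟩ ⟨hr, hle⟩)
  have h8 : 0 < 8 * (q - 1) := by linarith
  calc (8 * (q - 1))⁻¹ = ((8 * (q - 1)) ^ (-(1 / 2) : ℝ)) ^ 2 := by
        rw [← Real.rpow_natCast, ← Real.rpow_mul h8.le]; norm_num [Real.rpow_neg_one]
    _ < (c₄ * ω r) ^ 2 := pow_lt_pow_left₀ hM (Real.rpow_pos_of_pos h8 _).le two_ne_zero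

theorem inv_le_of_rq_add_half_lt {p r : ℝ} (hp : 1 / 2 < p) (hr : r ∈ Ioc 0 1)
    (h : rq c₄ ω (p + 1 / 2) < r) : p⁻¹ ≤ 8 * (c₄ * ω r) ^ 2 := by
  have hlt := inv_lt_sq_of_rq_lt (by linarith) hr h
  calc p⁻¹ = 8 * (8 * p)⁻¹ := by
        rw [mul_inv, ← mul_assoc, mul_inv_cancel₀ (by norm_num), one_mul]
    _ ≤ 8 * (8 * (p + 1 / 2 - 1))⁻¹ := by gcongr <;> linarith
    _ ≤ 8 * (c₄ * ω r) ^ 2 := by linarith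

end rq

/-- If `ω : [0,1] → ℝ` is continuous, strictly increasing, `ω(0) = 0`,
`ω(r) ≥ r`, and `∫₀¹ ω(r)²/r dr < ∞`, then for `k₀` the least natural number with
`χ^{k₀} > 19/2`, the series `∑_{k ≥ k₀} χ^{−k}·log(1/r_{χ^k+1/2})` converges and is
bounded by `C·∫₀¹ ω(r)²/r dr`, where `C > 0` depends only on `χ` and `c₄`. -/
theorem dini_series_bound (χ c₄ : ℝ) (hχ : 1 < χ) (hc₄ : 0 < c₄) :
    ∃ C > (0 : ℝ), ∀ ω : ℝ → ℝ,
      ContinuousOn ω (Set.Icc 0 1) →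
      StrictMonoOn ω (Set.Icc 0 1) →
      ω 0 = 0 →
      (∀ r ∈ Set.Icc (0 : ℝ) 1, r ≤ ω r) →
      IntegrableOn (fun r => ω r ^ 2 / r) (Set.Ioc 0 1) →
      ∀ k₀ : ℕ, 19 / 2 < χ ^ k₀ → (∀ j : ℕ, j < k₀ → χ ^ j ≤ 19 / 2) →
        Summable (fun k : ℕ =>
            χ ^ (-((k₀ + k : ℕ) : ℝ)) * Real.log (1 / rq c₄ ω (χ ^ (k₀ + k) + 1 / 2))) ∧
          ∑' k : ℕ,
              χ ^ (-((k₀ + k : ℕ) : ℝ)) * Real.log (1 / rq c₄ ω (χ ^ (k₀ + k) + 1 / 2))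
            ≤ C * ∫ r in Set.Ioc (0 : ℝ) 1, ω r ^ 2 / r := by
  have hχ₀ : 0 < χ := one_pos.trans hχ
  have hχ₁ : χ⁻¹ < 1 := inv_lt_one_of_one_lt₀ hχ
  have hgeom : 0 < 1 - χ⁻¹ := sub_pos.2 hχ₁
  refine ⟨8 * c₄ ^ 2 / (1 - χ⁻¹), by positivity, fun ω hω _ hω₀ _ hint k₀ _ _ => ?_⟩
  set ρ : ℕ → ℝ := fun k => rq c₄ ω (χ ^ (k₀ + k) + 1 / 2)
  have hp : ∀ k, 1 / 2 < χ ^ (k₀ + k) := fun k => by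
    linarith [one_le_pow₀ (n := k₀ + k) hχ.le]
  have hρ : ∀ k, ρ k ∈ Ioc 0 1 := fun k =>
    rq_mem_Ioc (hω 0 ⟨le_rfl, zero_le_one⟩) hω₀ (by linarith [hp k])
  have hcoef : ∀ k : ℕ, χ ^ (-((k₀ + k : ℕ) : ℝ)) = χ⁻¹ ^ k₀ * χ⁻¹ ^ k := fun k => by
    rw [Real.rpow_neg hχ₀.le, Real.rpow_natCast, ← inv_pow, pow_add]
  simp only [hcoef]
  have hsum : ∀ s : Finset ℕ, ∑ k ∈ s, χ⁻¹ ^ k₀ * χ⁻¹ ^ k * Real.log (1 / ρ k)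
      ≤ 8 * c₄ ^ 2 / (1 - χ⁻¹) * ∫ r in Ioc 0 1, ω r ^ 2 / r := fun s => by
    rw [← integral_const_mul]
    refine sum_mul_log_inv_le_setIntegral s (fun k _ => hρ k) (hint.const_mul _) fun r hr => ?_
    rw [show r * (8 * c₄ ^ 2 / (1 - χ⁻¹) * (ω r ^ 2 / r)) = 8 * (c₄ * ω r) ^ 2 / (1 - χ⁻¹) by
      field_simp [hr.1.ne']]
    refine Finset.sum_mul_pow_le_div_one_sub (by positivity) hχ₁ (by positivity) (by positivity)
      fun k hk => ?_
    rw [← pow_add, inv_pow]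
    exact inv_le_of_rq_add_half_lt (hp k) hr (Finset.mem_filter.1 hk).2
  have hnonneg : 0 ≤ fun k => χ⁻¹ ^ k₀ * χ⁻¹ ^ k * Real.log (1 / ρ k) := fun k =>
    mul_nonneg (by positivity) (Real.log_nonneg (one_le_one_div (hρ k).1 (hρ k).2))
  exact ⟨summable_of_sum_le hnonneg hsum, Real.tsum_le_of_sum_le hnonneg hsum⟩
end

section
/- Let ω : [0,1] → ℝ be continuous on [0,1], continuously differentiable on (0,1] with ω'(r) > 0 for all r ∈ (0,1], ω(0) = 0, and assume ∫₀¹ ω(r)²/r dr < ∞. Let ω⁻¹ : [0, ω(1)] → [0,1] denote the inverse function of ω. Then ∫₀^{ω(1)} s · log(1/ω⁻¹(s)) ds ≤ ∫₀¹ ω(r)²/(2r) dr. -/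
/-!
Both sides are the integral of `s / r` over the region `{(s, r) | 0 < r ≤ 1, 0 < s < ω r}`
under the graph of `ω`, taken in the two orders (Tonelli): the slice at height `s` is
`(ω⁻¹ s, 1]`, where `∫ s / r dr = s log (1 / ω⁻¹ s)`, and the slice at `r` is `(0, ω r)`, where
`∫ s / r ds = ω(r)² / (2r)`. So the inequality is in fact an equality. Since `ω' > 0`, `ω` is
strictly increasing, and this is what identifies the slices.
-/

open MeasureTheory Set Real
open scoped ENNReal

theorem setLIntegral_Ioc_ofReal_const_div {s a b : ℝ} (hs : 0 ≤ s) (ha : 0 < a) (hab : a ≤ b) :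
    ∫⁻ r in Ioc a b, ENNReal.ofReal (s / r) = ENNReal.ofReal (s * log (b / a)) := by
  have hcont : ContinuousOn (fun r => s / r) (Icc a b) :=
    continuousOn_const.div continuousOn_id fun r hr => (ha.trans_le hr.1).ne'
  rw [← ofReal_integral_eq_lintegral_ofReal
      (hcont.integrableOn_Icc.mono_set Ioc_subset_Icc_self)
      ((ae_restrict_mem measurableSet_Ioc).mono fun r hr => div_nonneg hs (ha.trans hr.1).le),
    ← intervalIntegral.integral_of_le hab]
  simp only [div_eq_mul_inv s, intervalIntegral.integral_const_mul,
    integral_inv_of_pos ha (ha.trans_le hab)]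

theorem setLIntegral_Ioo_zero_ofReal_div_const {r c : ℝ} (hr : 0 < r) (hc : 0 ≤ c) :
    ∫⁻ s in Ioo 0 c, ENNReal.ofReal (s / r) = ENNReal.ofReal (c ^ 2 / (2 * r)) := by
  rw [setLIntegral_congr Ioo_ae_eq_Ioc,
    ← ofReal_integral_eq_lintegral_ofReal
      ((by fun_prop : Continuous fun s : ℝ => s / r).integrableOn_Icc.mono_set Ioc_subset_Icc_self)
      ((ae_restrict_mem measurableSet_Ioc).mono fun s hs => div_nonneg hs.1.le hr.le),
    ← intervalIntegral.integral_of_le hc, intervalIntegral.integral_div, integral_id]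
  congr 1
  ring

theorem strictMonoOn_Icc_of_hasDerivWithinAt_pos {f f' : ℝ → ℝ} {a b : ℝ}
    (hf : ContinuousOn f (Icc a b))
    (hf' : ∀ x ∈ Ioo a b, HasDerivWithinAt f (f' x) (Icc a b) x)
    (hf'₀ : ∀ x ∈ Ioo a b, 0 < f' x) : StrictMonoOn f (Icc a b) := by
  refine strictMonoOn_of_hasDerivWithinAt_pos (f' := f') (convex_Icc a b) hf ?_ ?_ <;>
    rw [interior_Icc]
  · exact fun x hx => (hf' x hx).mono Ioo_subset_Icc_self
  · exact hf'₀

theorem setLIntegral_mul_log_inv_eq {ω g : ℝ → ℝ} (hc : ContinuousOn ω (Icc 0 1))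
    (hmono : StrictMonoOn ω (Icc 0 1)) (h0 : ω 0 = 0)
    (hg : ∀ r ∈ Icc (0 : ℝ) 1, g (ω r) = r) :
    ∫⁻ s in Ioc 0 (ω 1), ENNReal.ofReal (s * log (1 / g s))
      = ∫⁻ r in Ioc 0 1, ENNReal.ofReal (ω r ^ 2 / (2 * r)) := by
  -- a continuous extension of `ω` to `ℝ`, making the region under its graph measurable
  set Ω : ℝ → ℝ := IccExtend zero_le_one (domRestrict (Icc 0 1) ω)
  have hΩ_eq : ∀ r ∈ Icc (0 : ℝ) 1, Ω r = ω r := fun r hr => IccExtend_of_mem _ _ hr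
  set F : ℝ × ℝ → ℝ≥0∞ :=
    {p | p.1 < Ω p.2}.indicator fun p => ENNReal.ofReal (p.1 / p.2)
  have hF : Measurable F :=
    (measurable_fst.div measurable_snd).ennreal_ofReal.indicator <| measurableSet_lt
      measurable_fst <| (continuous_IccExtend_iff.2
        (continuousOn_iff_continuous_domRestrict.1 hc)).measurable.comp measurable_snd
  have hpos : ∀ r ∈ Ioc (0 : ℝ) 1, 0 < ω r := fun r hr =>
    h0 ▸ hmono (left_mem_Icc.2 zero_le_one) (Ioc_subset_Icc_self hr) hr.1
  calc ∫⁻ s in Ioc 0 (ω 1), ENNReal.ofReal (s * log (1 / g s))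
      = ∫⁻ s in Ioc 0 (ω 1), ∫⁻ r in Ioc 0 1, F (s, r) := by
        refine setLIntegral_congr_fun measurableSet_Ioc fun s hs => ?_
        obtain ⟨r₀, hr₀, rfl⟩ := intermediate_value_Ioc zero_le_one hc (h0 ▸ hs)
        have hF_eq : ∀ r ∈ Ioc (0 : ℝ) 1,
            F (ω r₀, r) = (Ioc r₀ 1).indicator (fun r => ENNReal.ofReal (ω r₀ / r)) r := by
          intro r hr
          have : ω r₀ < Ω r ↔ r ∈ Ioc r₀ 1 := by
            rw [hΩ_eq r (Ioc_subset_Icc_self hr),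
              hmono.lt_iff_lt (Ioc_subset_Icc_self hr₀) (Ioc_subset_Icc_self hr)]
            exact ⟨fun h => ⟨h, hr.2⟩, And.left⟩
          simp only [F, indicator_apply, mem_ofPred_eq, this]
        rw [setLIntegral_congr_fun measurableSet_Ioc hF_eq,
          setLIntegral_indicator measurableSet_Ioc,
          inter_eq_left.2 (Ioc_subset_Ioc_left hr₀.1.le),
          setLIntegral_Ioc_ofReal_const_div (hpos r₀ hr₀).le hr₀.1 hr₀.2,
          hg r₀ (Ioc_subset_Icc_self hr₀)]
    _ = ∫⁻ r in Ioc 0 1, ∫⁻ s in Ioc 0 (ω 1), F (s, r) :=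
        lintegral_lintegral_swap hF.aemeasurable
    _ = ∫⁻ r in Ioc 0 1, ENNReal.ofReal (ω r ^ 2 / (2 * r)) := by
        refine setLIntegral_congr_fun measurableSet_Ioc fun r hr => ?_
        have hF_eq : ∀ s ∈ Ioc 0 (ω 1),
            F (s, r) = (Ioo 0 (ω r)).indicator (fun s => ENNReal.ofReal (s / r)) s := by
          intro s hs
          have : s < Ω r ↔ s ∈ Ioo 0 (ω r) := by
            rw [hΩ_eq r (Ioc_subset_Icc_self hr)]
            exact ⟨fun h => ⟨hs.1, h⟩, And.right⟩
          simp only [F, indicator_apply, mem_ofPred_eq, this]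
        have hle : ω r ≤ ω 1 :=
          hmono.monotoneOn (Ioc_subset_Icc_self hr) (right_mem_Icc.2 zero_le_one) hr.2
        rw [setLIntegral_congr_fun measurableSet_Ioc hF_eq,
          setLIntegral_indicator measurableSet_Ioo,
          inter_eq_left.2 (Ioo_subset_Ioc_self.trans (Ioc_subset_Ioc_right hle)),
          setLIntegral_Ioo_zero_ofReal_div_const hr.1 (hpos r hr).le]

theorem integral_log_inverse_bound_general (ω ω' g : ℝ → ℝ)
    (hc : ContinuousOn ω (Set.Icc 0 1))
    (hderiv : ∀ r ∈ Set.Ioc (0 : ℝ) 1, HasDerivWithinAt ω (ω' r) (Set.Icc 0 1) r)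
    (hpos : ∀ r ∈ Set.Ioc (0 : ℝ) 1, 0 < ω' r)
    (h0 : ω 0 = 0)
    (hint : IntegrableOn (fun r => ω r ^ 2 / r) (Set.Ioc 0 1))
    (hg : ∀ r ∈ Set.Icc (0 : ℝ) 1, g (ω r) = r) :
    ∫⁻ s in Set.Ioc (0 : ℝ) (ω 1), ENNReal.ofReal (s * Real.log (1 / g s))
      ≤ ENNReal.ofReal (∫ r in Set.Ioc (0 : ℝ) 1, ω r ^ 2 / (2 * r)) := by
  have hmono : StrictMonoOn ω (Icc 0 1) :=
    strictMonoOn_Icc_of_hasDerivWithinAt_pos hc (fun r hr => hderiv r (Ioo_subset_Ioc_self hr))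
      fun r hr => hpos r (Ioo_subset_Ioc_self hr)
  have hint' : IntegrableOn (fun r => ω r ^ 2 / (2 * r)) (Ioc 0 1) :=
    IntegrableOn.congr_fun (hint.div_const 2) (fun r _ => by ring) measurableSet_Ioc
  rw [setLIntegral_mul_log_inv_eq hc hmono h0 hg, ofReal_integral_eq_lintegral_ofReal hint'
    ((ae_restrict_mem measurableSet_Ioc).mono fun r hr => by have := hr.1; positivity)]

/-- If `ω : [0,1] → ℝ` is continuous on `[0,1]`, continuously differentiable
on `(0,1]` with positive derivative, `ω(0) = 0`, and `∫₀¹ ω(r)²/r dr < ∞`, and `g = ω⁻¹`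
is the inverse function of `ω`, then `∫₀^{ω(1)} s·log(1/ω⁻¹(s)) ds ≤ ∫₀¹ ω(r)²/(2r) dr`. -/
theorem integral_log_inverse_bound (ω ω' g : ℝ → ℝ)
    (hc : ContinuousOn ω (Set.Icc 0 1))
    (hderiv : ∀ r ∈ Set.Ioc (0 : ℝ) 1, HasDerivWithinAt ω (ω' r) (Set.Icc 0 1) r)
    (hc' : ContinuousOn ω' (Set.Ioc 0 1))
    (hpos : ∀ r ∈ Set.Ioc (0 : ℝ) 1, 0 < ω' r)
    (h0 : ω 0 = 0)
    (hint : IntegrableOn (fun r => ω r ^ 2 / r) (Set.Ioc 0 1))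
    (hg : ∀ r ∈ Set.Icc (0 : ℝ) 1, g (ω r) = r)
    (hg' : ∀ s ∈ Set.Icc (0 : ℝ) (ω 1), ω (g s) = s) :
    ∫⁻ s in Set.Ioc (0 : ℝ) (ω 1), ENNReal.ofReal (s * Real.log (1 / g s))
      ≤ ENNReal.ofReal (∫ r in Set.Ioc (0 : ℝ) 1, ω r ^ 2 / (2 * r)) :=
  integral_log_inverse_bound_general ω ω' g hc hderiv hpos h0 hint hg
end

section
/- Let (X, μ) be a measure space with 0 < μ(X) < ∞, let χ > 1 be real, let k₀ be a natural number, and let u : X → ℝ be a nonnegative measurable function with ‖u‖_{L^{χ^{k₀}}(μ)} < ∞. Suppose there are real numbers A_k ≥ 1 for k ≥ k₀ such that ‖u‖_{L^{χ^{k+1}}(μ)} ≤ A_k^{1/χ^k} · ‖u‖_{L^{χ^k}(μ)} for every integer k ≥ k₀, and that S := ∑_{k=k₀}^∞ χ^{−k} log A_k < ∞. Then u ∈ L^∞(μ) and essSup u ≤ e^S · ‖u‖_{L^{χ^{k₀}}(μ)}. -/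
/-!
Telescoping the recursion gives `‖u‖_{χ^k} ≤ e^S ‖u‖_{χ^{k₀}} =: C` for every `k ≥ k₀`. A bound on
`‖u‖_p` along exponents `p → ∞` is an `L^∞` bound: for `ε > C`, Chebyshev gives
`μ {ε ≤ |u|} ≤ (C / ε) ^ p → 0`.
-/

open MeasureTheory Filter
open scoped ENNReal

theorem eLpNorm_top_le_of_eLpNorm_le {α E : Type*} [MeasurableSpace α] {μ : Measure α}
    [NormedAddCommGroup E] {f : α → E} (hf : AEStronglyMeasurable f μ) {C : ℝ≥0∞} {p : ℕ → ℝ}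
    (hp : Tendsto p atTop atTop) (hC : ∀ n, eLpNorm f (ENNReal.ofReal (p n)) μ ≤ C) :
    eLpNorm f ⊤ μ ≤ C := by
  refine le_of_forall_gt_imp_ge_of_dense fun ε hCε => ?_
  rcases eq_or_ne ε ⊤ with rfl | hε_top
  · exact le_top
  have hε0 : ε ≠ 0 := (hCε.trans_le' bot_le).ne'
  have hratio : ε⁻¹ * C < 1 := by
    rwa [← ENNReal.div_eq_inv_mul, ENNReal.div_lt_iff (Or.inl hε0) (Or.inl hε_top), one_mul]
  have hnull : μ {x | ε ≤ ‖f x‖ₑ} = 0 := by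
    refine le_antisymm (ge_of_tendsto
      ((ENNReal.tendsto_rpow_atTop_of_base_lt_one hratio).comp hp) ?_) bot_le
    filter_upwards [hp.eventually_gt_atTop 0] with n hpn
    have hp0 : ENNReal.ofReal (p n) ≠ 0 := by simpa using hpn
    calc μ {x | ε ≤ ‖f x‖ₑ}
        ≤ ε⁻¹ ^ p n * eLpNorm f (ENNReal.ofReal (p n)) μ ^ p n := by
          simpa [ENNReal.toReal_ofReal hpn.le] using
            meas_ge_le_mul_pow_eLpNorm_enorm μ hp0 ENNReal.ofReal_ne_top hf hε0 (absurd · hε_top)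
      _ ≤ (ε⁻¹ * C) ^ p n := by
          rw [ENNReal.mul_rpow_of_nonneg _ _ hpn.le]
          gcongr
          exact hC n
  rw [eLpNorm_exponent_top]
  exact essSup_le_of_ae_le ε
    (measure_mono_null (fun x (hx : ¬ ‖f x‖ₑ ≤ ε) => (not_le.mp hx).le) hnull)

theorem le_ofReal_exp_sum_mul_of_le_ofReal_exp_mul {N : ℕ → ℝ≥0∞} {c : ℕ → ℝ}
    (h : ∀ n, N (n + 1) ≤ ENNReal.ofReal (Real.exp (c n)) * N n) (n : ℕ) :
    N n ≤ ENNReal.ofReal (Real.exp (∑ j ∈ Finset.range n, c j)) * N 0 := by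
  induction n with
  | zero => simp
  | succ n ih =>
    calc N (n + 1) ≤ ENNReal.ofReal (Real.exp (c n)) * N n := h n
      _ ≤ ENNReal.ofReal (Real.exp (c n))
            * (ENNReal.ofReal (Real.exp (∑ j ∈ Finset.range n, c j)) * N 0) := by gcongr
      _ = _ := by
          rw [← mul_assoc, ← ENNReal.ofReal_mul (Real.exp_nonneg _), ← Real.exp_add,
            Finset.sum_range_succ, add_comm]

theorem le_ofReal_exp_tsum_mul_of_le_ofReal_exp_mul {N : ℕ → ℝ≥0∞} {c : ℕ → ℝ}
    (hc : Summable c) (hc0 : ∀ n, 0 ≤ c n)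
    (h : ∀ n, N (n + 1) ≤ ENNReal.ofReal (Real.exp (c n)) * N n) (n : ℕ) :
    N n ≤ ENNReal.ofReal (Real.exp (∑' j, c j)) * N 0 := by
  refine (le_ofReal_exp_sum_mul_of_le_ofReal_exp_mul h n).trans ?_
  gcongr
  exact hc.sum_le_tsum _ fun j _ => hc0 j

theorem Real.rpow_one_div_pow_eq_exp {a χ : ℝ} (ha : 0 < a) (hχ : 0 ≤ χ) (k : ℕ) :
    a ^ (1 / χ ^ k) = Real.exp (χ ^ (-(k : ℝ)) * Real.log a) := by
  rw [Real.rpow_def_of_pos ha, Real.rpow_neg hχ, Real.rpow_natCast, mul_one_div, div_eq_inv_mul]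

theorem moser_iteration_abstract_general
    {X : Type*} [MeasurableSpace X] (μ : Measure X)
    (χ : ℝ) (hχ : 1 < χ) (k₀ : ℕ)
    (u : X → ℝ) (hu : Measurable u)
    (hfin : eLpNorm u (ENNReal.ofReal (χ ^ k₀)) μ < ⊤)
    (A : ℕ → ℝ) (hA : ∀ k, k₀ ≤ k → 1 ≤ A k)
    (hrec : ∀ k, k₀ ≤ k →
      eLpNorm u (ENNReal.ofReal (χ ^ (k + 1))) μ
        ≤ ENNReal.ofReal (A k ^ (1 / χ ^ k)) * eLpNorm u (ENNReal.ofReal (χ ^ k)) μ)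
    (hS : Summable fun k : ℕ => χ ^ (-((k₀ + k : ℕ) : ℝ)) * Real.log (A (k₀ + k))) :
    MemLp u ⊤ μ ∧
      eLpNorm u ⊤ μ
        ≤ ENNReal.ofReal
            (Real.exp (∑' k : ℕ, χ ^ (-((k₀ + k : ℕ) : ℝ)) * Real.log (A (k₀ + k)))) *
          eLpNorm u (ENNReal.ofReal (χ ^ k₀)) μ := by
  have hχ0 : 0 < χ := one_pos.trans hχ
  have hA' (n : ℕ) : 1 ≤ A (k₀ + n) := hA _ (Nat.le_add_right _ _)
  have hstep (n : ℕ) : eLpNorm u (ENNReal.ofReal (χ ^ (k₀ + (n + 1)))) μ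
      ≤ ENNReal.ofReal (Real.exp (χ ^ (-((k₀ + n : ℕ) : ℝ)) * Real.log (A (k₀ + n))))
        * eLpNorm u (ENNReal.ofReal (χ ^ (k₀ + n))) μ := by
    rw [← Real.rpow_one_div_pow_eq_exp (one_pos.trans_le (hA' n)) hχ0.le]
    exact hrec (k₀ + n) (Nat.le_add_right _ _)
  have hbound := le_ofReal_exp_tsum_mul_of_le_ofReal_exp_mul hS
    (fun n => mul_nonneg (by positivity) (Real.log_nonneg (hA' n))) hstep
  simp only [add_zero] at hbound
  have hp : Tendsto (fun n => χ ^ (k₀ + n)) atTop atTop :=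
    (tendsto_pow_atTop_atTop_of_one_lt hχ).comp
      (tendsto_atTop_mono (Nat.le_add_left · k₀) tendsto_id)
  have hess := eLpNorm_top_le_of_eLpNorm_le hu.aestronglyMeasurable hp hbound
  refine ⟨⟨hu.aestronglyMeasurable, hess.trans_lt ?_⟩, hess⟩
  exact ENNReal.mul_lt_top ENNReal.ofReal_lt_top hfin

/-- Abstract Nash–Moser iteration: on a finite measure space, if
`‖u‖_{L^{χ^{k+1}}} ≤ A_k^{1/χ^k}·‖u‖_{L^{χ^k}}` for all `k ≥ k₀` with `A_k ≥ 1` and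
`S = ∑_{k ≥ k₀} χ^{−k} log A_k < ∞`, then `u ∈ L^∞` and
`essSup u ≤ e^S·‖u‖_{L^{χ^{k₀}}}`. -/
theorem moser_iteration_abstract
    {X : Type*} [MeasurableSpace X] (μ : Measure X) [IsFiniteMeasure μ]
    (hμ : 0 < μ Set.univ)
    (χ : ℝ) (hχ : 1 < χ) (k₀ : ℕ)
    (u : X → ℝ) (hu : Measurable u) (hu0 : ∀ x, 0 ≤ u x)
    (hfin : eLpNorm u (ENNReal.ofReal (χ ^ k₀)) μ < ⊤)
    (A : ℕ → ℝ) (hA : ∀ k, k₀ ≤ k → 1 ≤ A k)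
    (hrec : ∀ k, k₀ ≤ k →
      eLpNorm u (ENNReal.ofReal (χ ^ (k + 1))) μ
        ≤ ENNReal.ofReal (A k ^ (1 / χ ^ k)) * eLpNorm u (ENNReal.ofReal (χ ^ k)) μ)
    (hS : Summable fun k : ℕ => χ ^ (-((k₀ + k : ℕ) : ℝ)) * Real.log (A (k₀ + k))) :
    MemLp u ⊤ μ ∧
      eLpNorm u ⊤ μ
        ≤ ENNReal.ofReal
            (Real.exp (∑' k : ℕ, χ ^ (-((k₀ + k : ℕ) : ℝ)) * Real.log (A (k₀ + k)))) *
          eLpNorm u (ENNReal.ofReal (χ ^ k₀)) μ :=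
  moser_iteration_abstract_general μ χ hχ k₀ u hu hfin A hA hrec hS
end
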